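/- arXiv:1803.10079 — 3 statements merged into one kernel-verified Lean document; each statement's English description precedes it below -/
import Mathlib

section
/- Let R be a nontrivial commutative ring and A a rank-two diagonalisable commutative Frobenius algebra over R with diagonal basis {a,b}. Then ε(a) is a unit of R. -/
/-!
By nondegeneracy some `x` satisfies `ε (x * y) = B.coord 0 y` for all `y`, so `ε (x * a) = 1`.
Since `a` is an idempotent orthogonal to the other basis vector, `x * a = r • a` for a scalar `r`,
whence `r * ε a = 1`.
-/

open TensorProduct

namespace Module.Basis

variable {R A ι : Type*} [CommSemiring R] [Semiring A] [Algebra R A] [Fintype ι]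

theorem mul_apply_eq_repr_smul_of_orthogonal_idempotent (B : Basis ι R A) {i : ι}
    (hi : B i * B i = B i) (horth : ∀ j ≠ i, B j * B i = 0) (x : A) :
    x * B i = B.repr x i • B i := by
  classical
  conv_lhs => rw [← B.sum_repr x]
  rw [Finset.sum_mul, Finset.sum_eq_single i (fun j _ hj => by rw [smul_mul_assoc, horth j hj,
    smul_zero]) (fun h => absurd (Finset.mem_univ i) h), smul_mul_assoc, hi]

end Module.Basis

theorem isUnit_apply_of_mul_eq_smul {R A : Type*} [CommSemiring R] [Semiring A] [Algebra R A]
    {ε : A →ₗ[R] R} (hε : Function.Surjective fun x : A => ε ∘ₗ LinearMap.mul R A x)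
    {e : A} (φ : A →ₗ[R] R) (hφ : φ e = 1) (hscalar : ∀ x : A, ∃ r : R, x * e = r • e) :
    IsUnit (ε e) := by
  obtain ⟨x, hx⟩ := hε φ
  obtain ⟨r, hr⟩ := hscalar x
  have hxe : r * ε e = 1 := by
    rw [← hφ, ← hx]
    simp [hr]
  exact IsUnit.of_mul_eq_one_right r hxe

theorem diagonalisable_frobenius_counit_isUnit_general
(R A : Type*) [CommRing R] [CommRing A] [Algebra R A]
    (B : Module.Basis (Fin 2) R A) (a b : A) (hB0 : B 0 = a) (hB1 : B 1 = b)
    (ha : a * a = a) (hab : a * b = 0)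
    (ε : A →ₗ[R] R)
    (hnd : Function.Bijective fun x : A => ε ∘ₗ LinearMap.mul R A x) :
    IsUnit (ε a) := by
  have horth : ∀ j ≠ (0 : Fin 2), B j * B 0 = 0 := by
    intro j hj
    obtain rfl : j = 1 := by omega
    rw [hB0, hB1, mul_comm, hab]
  subst hB0
  refine isUnit_apply_of_mul_eq_smul hnd.surjective (B.coord 0) (by simp) fun x => ?_
  exact ⟨_, B.mul_apply_eq_repr_smul_of_orthogonal_idempotent ha horth x⟩

/-- For a rank-two diagonalisable commutative Frobenius algebra `A` over a
nontrivial commutative ring `R` with diagonal basis `{a, b}`, the counit value `ε a` is a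
unit of `R`. -/
theorem diagonalisable_frobenius_counit_isUnit
(R A : Type*) [CommRing R] [Nontrivial R] [CommRing A] [Algebra R A]
    (B : Module.Basis (Fin 2) R A) (a b : A) (hB0 : B 0 = a) (hB1 : B 1 = b)
    (ha : a * a = a) (hb : b * b = b) (hab : a * b = 0)
    (ε : A →ₗ[R] R) (Δ : A →ₗ[R] A ⊗[R] A)
    (hnd : Function.Bijective fun x : A => ε ∘ₗ LinearMap.mul R A x)
    (hfrob : ∀ x y : A,
      TensorProduct.rid R A
        (TensorProduct.map LinearMap.id (ε ∘ₗ LinearMap.mulRight R y) (Δ x)) = x * y) :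
    IsUnit (ε a) :=
  diagonalisable_frobenius_counit_isUnit_general R A B a b hB0 hB1 ha hab ε hnd
end

section
/- Let R be a nontrivial commutative ring and A a rank-two diagonalisable commutative Frobenius algebra over R with diagonal basis {a,b}. Write Δ(a) = α·(a⊗a) + β·(a⊗b) + γ·(b⊗a) + δ·(b⊗b) in the basis {a⊗a, a⊗b, b⊗a, b⊗b} of A ⊗_R A. Then β = 0, γ = 0, and δ = 0. -/
/-!
Contracting `Δ a` against `y` with the Frobenius pairing gives `a * y`; taking `y = b` and `y = a`
and reading off coordinates in `{a, b}` yields `β ε(b) = δ ε(b) = 0` and `γ ε(a) = 0`.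
Nondegeneracy makes `ε(a)` and `ε(b)` units: if `ε(x * -)` is the coordinate functional of a basis
idempotent `e`, then `1 = ε(x * e) = xₑ ε(e)`, since `x * e = xₑ • e` in a basis of orthogonal
idempotents.
-/

open TensorProduct

namespace Module.Basis

variable {R A ι : Type*} [CommRing R] [CommRing A] [Algebra R A] [Fintype ι] [DecidableEq ι]
  (B : Basis ι R A) (hB : ∀ i j, B i * B j = if i = j then B i else 0)
include hB

theorem mul_eq_repr_smul_of_orthogonal_idempotents (x : A) (i : ι) :
    x * B i = B.repr x i • B i := by
  calc x * B i = (∑ j, B.repr x j • B j) * B i := by rw [B.sum_repr]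
    _ = B.repr x i • B i := by
      simp only [Finset.sum_mul, smul_mul_assoc, hB, smul_ite, smul_zero, Finset.sum_ite_eq',
        Finset.mem_univ, if_true]

theorem isUnit_apply_of_orthogonal_idempotents (ε : A →ₗ[R] R)
    (hε : Function.Surjective fun x : A => ε ∘ₗ LinearMap.mul R A x) (i : ι) :
    IsUnit (ε (B i)) := by
  obtain ⟨x, hx⟩ := hε (B.coord i)
  have h : ε (x * B i) = 1 := by simpa using LinearMap.congr_fun hx (B i)
  rw [B.mul_eq_repr_smul_of_orthogonal_idempotents hB, map_smul, smul_eq_mul] at h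
  exact IsUnit.of_mul_eq_one_right _ h

end Module.Basis

theorem rid_map_comp_mulRight_pair_expansion {R A : Type*} [CommRing R] [CommRing A]
    [Algebra R A] (ε : A →ₗ[R] R) (a b y : A) (α β γ δ : R) :
    TensorProduct.rid R A (TensorProduct.map LinearMap.id (ε ∘ₗ LinearMap.mulRight R y)
        (α • (a ⊗ₜ[R] a) + β • (a ⊗ₜ[R] b) + γ • (b ⊗ₜ[R] a) + δ • (b ⊗ₜ[R] b))) =
      (α * ε (a * y) + β * ε (b * y)) • a + (γ * ε (a * y) + δ * ε (b * y)) • b := by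
  simp only [map_add, map_smul, TensorProduct.map_tmul, LinearMap.id_coe, id_eq,
    LinearMap.comp_apply, LinearMap.mulRight_apply, TensorProduct.rid_tmul]
  module

theorem diagonalisable_frobenius_comul_coeffs_vanish_general
(R A : Type*) [CommRing R] [CommRing A] [Algebra R A]
    (B : Module.Basis (Fin 2) R A) (a b : A) (hB0 : B 0 = a) (hB1 : B 1 = b)
    (ha : a * a = a) (hb : b * b = b) (hab : a * b = 0)
    (ε : A →ₗ[R] R) (Δ : A →ₗ[R] A ⊗[R] A)
    (hnd : Function.Bijective fun x : A => ε ∘ₗ LinearMap.mul R A x)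
    (hfrob : ∀ x y : A,
      TensorProduct.rid R A
        (TensorProduct.map LinearMap.id (ε ∘ₗ LinearMap.mulRight R y) (Δ x)) = x * y)
    (α β γ δ : R)
    (hΔa : Δ a = α • (a ⊗ₜ[R] a) + β • (a ⊗ₜ[R] b) + γ • (b ⊗ₜ[R] a) + δ • (b ⊗ₜ[R] b)) :
    β = 0 ∧ γ = 0 ∧ δ = 0 := by
  have hlin : LinearIndependent R ![a, b] := by
    convert B.linearIndependent
    ext i; fin_cases i <;> simp [hB0, hB1]
  have horth : ∀ i j, B i * B j = if i = j then B i else 0 := by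
    intro i j; fin_cases i <;> fin_cases j <;> simp [hB0, hB1, ha, hb, hab, mul_comm b a]
  have hεa : IsUnit (ε a) := hB0 ▸ B.isUnit_apply_of_orthogonal_idempotents horth ε hnd.2 0
  have hεb : IsUnit (ε b) := hB1 ▸ B.isUnit_apply_of_orthogonal_idempotents horth ε hnd.2 1
  have hcontract (y : A) :=
    (rid_map_comp_mulRight_pair_expansion ε a b y α β γ δ).symm.trans (hΔa ▸ hfrob a y)
  obtain ⟨hβ, hγ, hδ⟩ : β * ε b = 0 ∧ γ * ε a = 0 ∧ δ * ε b = 0 := by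
    have hcoord_b := hlin.eq_of_pair (s' := 0) (t' := 0)
      (by rw [hcontract b, hab, zero_smul, zero_smul, add_zero])
    have hcoord_a := hlin.eq_of_pair (s' := 1) (t' := 0)
      (by rw [hcontract a, ha, one_smul, zero_smul, add_zero])
    simp only [hab, hb, ha, mul_comm b a, map_zero, mul_zero, zero_add, add_zero]
      at hcoord_b hcoord_a
    exact ⟨hcoord_b.1, hcoord_a.2, hcoord_b.2⟩
  exact ⟨hεb.mul_left_eq_zero.1 hβ, hεa.mul_left_eq_zero.1 hγ, hεb.mul_left_eq_zero.1 hδ⟩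

/-- For a rank-two diagonalisable commutative Frobenius algebra `A` over a
nontrivial commutative ring `R` with diagonal basis `{a, b}`, writing
`Δ a = α•(a⊗a) + β•(a⊗b) + γ•(b⊗a) + δ•(b⊗b)` in the basis
`{a⊗a, a⊗b, b⊗a, b⊗b}` of `A ⊗[R] A`, we have `β = 0`, `γ = 0` and `δ = 0`. -/
theorem diagonalisable_frobenius_comul_coeffs_vanish
(R A : Type*) [CommRing R] [Nontrivial R] [CommRing A] [Algebra R A]
    (B : Module.Basis (Fin 2) R A) (a b : A) (hB0 : B 0 = a) (hB1 : B 1 = b)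
    (ha : a * a = a) (hb : b * b = b) (hab : a * b = 0)
    (ε : A →ₗ[R] R) (Δ : A →ₗ[R] A ⊗[R] A)
    (hnd : Function.Bijective fun x : A => ε ∘ₗ LinearMap.mul R A x)
    (hfrob : ∀ x y : A,
      TensorProduct.rid R A
        (TensorProduct.map LinearMap.id (ε ∘ₗ LinearMap.mulRight R y) (Δ x)) = x * y)
    (α β γ δ : R)
    (hΔa : Δ a = α • (a ⊗ₜ[R] a) + β • (a ⊗ₜ[R] b) + γ • (b ⊗ₜ[R] a) + δ • (b ⊗ₜ[R] b)) :
    β = 0 ∧ γ = 0 ∧ δ = 0 :=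
  diagonalisable_frobenius_comul_coeffs_vanish_general R A B a b hB0 hB1 ha hb hab ε Δ hnd hfrob α β
    γ δ hΔa
end

section
/- Let R be a commutative ring and S a nonempty finite set. Let c be an assignment of a unit c(T,s) ∈ Rˣ to each pair consisting of a subset T ⊆ S and an element s ∈ S \ T, satisfying the anticommuting-square condition: for every subset T ⊆ S and distinct s, t ∈ S \ T, c(T,s)·c(T ∪ {s}, t) + c(T,t)·c(T ∪ {t}, s) = 0. For each k let C^k be the R-module of functions from {T ⊆ S : |T| = k} to R and d^k : C^k → C^{k+1} the map (d^k f)(T) = Σ_{s ∈ T} c(T \ {s}, s) · f(T \ {s}). Then the resulting cochain complex is acyclic: for every k, the kernel of d^k equals the image of d^{k-1} (where d^{-1} = 0 and d^k = 0 for k ≥ |S|); in particular d^0 is injective and d^{|S|-1} is surjective. -/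
/-- The cochain module `C^k`: `R`-valued functions on the `k`-element subsets of `S`. -/
abbrev BooleanCochain (R S : Type*) [Fintype S] (k : ℕ) : Type _ :=
  {T : Finset S // T.card = k} → R

/-- The differential `d^k : C^k → C^{k+1}` associated to an edge-labelling `c` of the
Boolean lattice by units: `(d^k f)(T) = Σ_{s ∈ T} c(T \ {s}, s) · f(T \ {s})`. -/
def booleanDiff {R S : Type*} [CommRing R] [Fintype S] [DecidableEq S]
    (c : Finset S → S → Rˣ) (k : ℕ) (f : BooleanCochain R S k) :
    BooleanCochain R S (k + 1) := fun T =>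
  ∑ s ∈ (T : Finset S).attach,
    (c ((T : Finset S).erase s.1) s.1 : R) *
      f ⟨(T : Finset S).erase s.1, by
        rw [Finset.card_erase_of_mem s.2, T.2]; rfl⟩

section Aux

variable {R S : Type*} [CommRing R] [Fintype S] [DecidableEq S]

/-- Extension of a cochain to all finsets (zero off the right cardinality). -/
def bcToFun (k : ℕ) (f : BooleanCochain R S k) : Finset S → R :=
  fun U => if h : U.card = k then f ⟨U, h⟩ else 0

lemma bcToFun_eq {k : ℕ} (f : BooleanCochain R S k) {U : Finset S} (h : U.card = k) :
    bcToFun k f U = f ⟨U, h⟩ := dif_pos h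

lemma bcToFun_zero (k : ℕ) (U : Finset S) :
    bcToFun k (0 : BooleanCochain R S k) U = 0 := by
  unfold bcToFun; split <;> rfl

lemma diff_apply (c : Finset S → S → Rˣ) (k : ℕ) (f : BooleanCochain R S k)
    (T : Finset S) (hT : T.card = k + 1) :
    booleanDiff c k f ⟨T, hT⟩
      = ∑ s ∈ T, (c (T.erase s) s : R) * bcToFun k f (T.erase s) := by
  rw [← Finset.sum_attach T (fun s => (c (T.erase s) s : R) * bcToFun k f (T.erase s))]
  refine Finset.sum_congr rfl fun s _ => ?_
  rw [bcToFun_eq f (by rw [Finset.card_erase_of_mem s.2, hT]; rfl)]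

/-- The contracting homotopy associated to a basepoint `s0`. -/
def bHom (c : Finset S → S → Rˣ) (s0 : S) (k : ℕ) (f : BooleanCochain R S (k + 1)) :
    BooleanCochain R S k := fun U =>
  if s0 ∈ (U : Finset S) then 0
  else ((c (U : Finset S) s0)⁻¹ : Rˣ) * bcToFun (k + 1) f (insert s0 (U : Finset S))

lemma bHom_pos (c : Finset S → S → Rˣ) (s0 : S) (k : ℕ) (f : BooleanCochain R S (k + 1))
    {U : Finset S} (hU : U.card = k) (h : s0 ∈ U) :
    bHom c s0 k f ⟨U, hU⟩ = 0 := if_pos h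

lemma bHom_neg (c : Finset S → S → Rˣ) (s0 : S) (k : ℕ) (f : BooleanCochain R S (k + 1))
    {U : Finset S} (hU : U.card = k) (h : s0 ∉ U) :
    bHom c s0 k f ⟨U, hU⟩
      = ((c U s0)⁻¹ : Rˣ) * bcToFun (k + 1) f (insert s0 U) := if_neg h

lemma bHom_zero (c : Finset S → S → Rˣ) (s0 : S) (k : ℕ) :
    bHom c s0 k (0 : BooleanCochain R S (k + 1)) = 0 := by
  funext U
  unfold bHom
  split
  · rfl
  · rw [bcToFun_zero, mul_zero]; rfl

/-- The key homotopy identity `d ∘ h + h ∘ d = id`. -/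
lemma bHom_homotopy (c : Finset S → S → Rˣ)
    (hsq : ∀ (T : Finset S) (s t : S), s ∉ T → t ∉ T → s ≠ t →
      (c T s : R) * (c (insert s T) t : R) + (c T t : R) * (c (insert t T) s : R) = 0)
    (s0 : S) (k : ℕ) (f : BooleanCochain R S (k + 1))
    (T : Finset S) (hT : T.card = k + 1) :
    booleanDiff c k (bHom c s0 k f) ⟨T, hT⟩
      + bHom c s0 (k + 1) (booleanDiff c (k + 1) f) ⟨T, hT⟩ = f ⟨T, hT⟩ := by
  rw [diff_apply]
  by_cases hs0 : s0 ∈ T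
  · rw [bHom_pos c s0 (k + 1) _ hT hs0, add_zero]
    have hce : (T.erase s0).card = k := by
      rw [Finset.card_erase_of_mem hs0, hT]; rfl
    rw [Finset.sum_eq_single_of_mem s0 hs0 (fun s hs hne => ?_)]
    · rw [bcToFun_eq (bHom c s0 k f) hce,
        bHom_neg c s0 k f hce (Finset.notMem_erase s0 T),
        Finset.insert_erase hs0, bcToFun_eq f hT, Units.mul_inv_cancel_left]
    · have hces : (T.erase s).card = k := by
        rw [Finset.card_erase_of_mem hs, hT]; rfl
      rw [bcToFun_eq (bHom c s0 k f) hces,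
        bHom_pos c s0 k f hces (Finset.mem_erase.mpr ⟨fun h => hne h.symm, hs0⟩), mul_zero]
  · rw [bHom_neg c s0 (k + 1) _ hT hs0]
    have hins : (insert s0 T).card = (k + 1) + 1 := by
      rw [Finset.card_insert_of_notMem hs0, hT]
    rw [bcToFun_eq (booleanDiff c (k + 1) f) hins,
      diff_apply c (k + 1) f (insert s0 T) hins,
      Finset.sum_insert hs0, Finset.erase_insert hs0, bcToFun_eq f hT,
      mul_add, Units.inv_mul_cancel_left, Finset.mul_sum]
    have key : ∀ s ∈ T,
        (c (T.erase s) s : R) * bcToFun k (bHom c s0 k f) (T.erase s)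
          + ((c T s0)⁻¹ : Rˣ) * ((c ((insert s0 T).erase s) s : R)
              * bcToFun (k + 1) f ((insert s0 T).erase s)) = 0 := by
      intro s hs
      have hsne : s ≠ s0 := fun h => hs0 (h ▸ hs)
      have hE : (insert s0 T).erase s = insert s0 (T.erase s) :=
        Finset.erase_insert_of_ne (fun h => hsne h.symm)
      have hces : (T.erase s).card = k := by
        rw [Finset.card_erase_of_mem hs, hT]; rfl
      have hs0e : s0 ∉ T.erase s := fun h => hs0 (Finset.mem_of_mem_erase h)
      rw [hE, bcToFun_eq (bHom c s0 k f) hces, bHom_neg c s0 k f hces hs0e]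
      have hsq' := hsq (T.erase s) s s0 (Finset.notMem_erase s T) hs0e hsne
      rw [Finset.insert_erase hs] at hsq'
      have h3 : ((c (T.erase s) s0)⁻¹ : Rˣ) * ((c (T.erase s) s0 : Rˣ) : R) = 1 :=
        Units.inv_mul _
      have h4 : ((c T s0)⁻¹ : Rˣ) * ((c T s0 : Rˣ) : R) = 1 := Units.inv_mul _
      set X := bcToFun (k + 1) f (insert s0 (T.erase s)) with hX
      linear_combination
        (X * ((c (T.erase s) s0)⁻¹ : Rˣ) * ((c T s0)⁻¹ : Rˣ)) * hsq'
        - (X * (c (T.erase s) s : R) * ((c (T.erase s) s0)⁻¹ : Rˣ)) * h4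
        - (X * ((c T s0)⁻¹ : Rˣ) * (c (insert s0 (T.erase s)) s : R)) * h3
    have hAC : (∑ s ∈ T, (c (T.erase s) s : R) * bcToFun k (bHom c s0 k f) (T.erase s))
        + ∑ s ∈ T, ((c T s0)⁻¹ : Rˣ) * ((c ((insert s0 T).erase s) s : R)
            * bcToFun (k + 1) f ((insert s0 T).erase s)) = 0 := by
      rw [← Finset.sum_add_distrib]
      exact Finset.sum_eq_zero key
    linear_combination hAC

end Aux

/-- Let `R` be a commutative ring and `S` a nonempty finite set.  Let `c`
assign a unit `c(T, s) ∈ Rˣ` to each subset `T ⊆ S` and element `s ∈ S \ T`, satisfying the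
anticommuting-square condition
`c(T,s)·c(T ∪ {s}, t) + c(T,t)·c(T ∪ {t}, s) = 0` for all `T` and distinct `s, t ∉ T`.
Then the cochain complex `(C^*, d)` with `(d^k f)(T) = Σ_{s ∈ T} c(T \ {s}, s) · f(T \ {s})`
is acyclic: the kernel of `d^k` equals the image of `d^{k-1}` in every degree.  With
`d^{-1} = 0` this says `d^0` is injective (first conjunct), and for every `k` the kernel of
`d^{k+1}` is contained in (hence, by `d ∘ d = 0` from Statement 7, equal to) the image of
`d^k` (second conjunct); for `k + 1 = |S|` the condition `d^{|S|} f = 0` is automatic since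
`C^{|S|+1}` is trivial, so this includes surjectivity of `d^{|S|-1}`. -/
theorem booleanComplex_acyclic
    (R S : Type*) [CommRing R] [Fintype S] [DecidableEq S] [Nonempty S]
    (c : Finset S → S → Rˣ)
    (hsq : ∀ (T : Finset S) (s t : S), s ∉ T → t ∉ T → s ≠ t →
      (c T s : R) * (c (insert s T) t : R) + (c T t : R) * (c (insert t T) s : R) = 0) :
    (∀ f : BooleanCochain R S 0, booleanDiff c 0 f = 0 → f = 0) ∧
    (∀ (k : ℕ) (f : BooleanCochain R S (k + 1)),
      booleanDiff c (k + 1) f = 0 → ∃ g : BooleanCochain R S k, booleanDiff c k g = f) := by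
  obtain ⟨s0⟩ := ‹Nonempty S›
  constructor
  · intro f hf
    have h1 : ({s0} : Finset S).card = 0 + 1 := by simp
    have h := congrFun hf ⟨{s0}, h1⟩
    rw [diff_apply c 0 f {s0} h1, Finset.sum_singleton, Finset.erase_singleton,
      bcToFun_eq f Finset.card_empty] at h
    have hz : f ⟨∅, Finset.card_empty⟩ = 0 :=
      (Units.mul_right_eq_zero _).mp h
    funext T
    obtain ⟨T, hT⟩ := T
    have hTe : T = ∅ := Finset.card_eq_zero.mp hT
    subst hTe
    exact hz
  · intro k f hf
    refine ⟨bHom c s0 k f, ?_⟩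
    funext T
    obtain ⟨T, hT⟩ := T
    have h := bHom_homotopy c hsq s0 k f T hT
    rw [hf, bHom_zero] at h
    simpa using h
end
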